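/- arXiv:2502.06363 — 2 statements merged into one kernel-verified Lean document; each statement's English description precedes it below -/
import Mathlib

section
/- (Noiseless simple regret of MVR, Matérn case, under a valid deterministic confidence bound.) Fix d ∈ ℕ+, ν > 1/2, α > 0, C̄ > 0 and B > 0. Assume the Matérn-type information-gain bound: for every m ∈ ℕ+, every λ > 0 and every m-tuple Z of points of 𝒳, I_{λ²I_m}(Z) ≤ C̄·(m/λ²)^{d/(2ν+d)}·(ln(1 + m/λ²))^{2ν/(2ν+d)}. Let f : 𝒳 → ℝ satisfy |f(x)| ≤ B for all x ∈ 𝒳 and the noiseless confidence bound: for every finite tuple X of points of 𝒳 with K(X,X) invertible and every x ∈ 𝒳, |f(x) − μ_0(x; X, f(X))| ≤ B·σ_0(x; X), where μ_0, σ_0 are the posterior mean and standard deviation with Σ = 0 and f(X) is the vector of values of f on X. For each T ∈ ℕ+, let x_1,…,x_T ∈ 𝒳 be chosen by maximum variance reduction with Σ = 0 (for every t ∈ [T] and x ∈ 𝒳, σ_0(x; X_{t−1}) ≤ σ_0(x_t; X_{t−1}), with K(X_t,X_t) assumed invertible for all t ≤ T), and let x̂_T ∈ 𝒳 satisfy μ_0(x;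 X_T, f(X_T)) ≤ μ_0(x̂_T; X_T, f(X_T)) for all x ∈ 𝒳. Then there exists C' > 0 depending only on C̄, ν, d, α such that for every T ≥ 2 and every x* ∈ 𝒳: f(x*) − f(x̂_T) ≤ C'·B·T^{−ν/d}·(ln T)^{ν(1+α)/d}. -/
/-!
The confidence bound and the choice of `x̂_T` give
`f x* - f x̂_T ≤ B (σ_T(x*) + σ_T(x̂_T))`, so it suffices to bound the noiseless posterior
variance `s = σ²_T(x)` uniformly in `x`. Noiseless posterior variances only shrink as points are
added, maximum variance reduction picks the point of largest variance, and adding observation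
noise `s` only increases variances; hence each of the `T` terms of the chain rule
`I_{s I}(X_T) = ½ ∑_t ln (1 + σ²_{s I}(x_t; X_{t-1}) / s)` is at least `ln 2`. Comparing
`T ln 2 / 2 ≤ I_{s I}(X_T)` with the Matérn bound at `λ² = s` forces
`s ≲ (ln T / T)^{2ν/d}`.
-/

open Matrix Real Finset

noncomputable section

universe u

/-- Gram (kernel) matrix of a finite tuple of points. -/
def gramMat {𝒳 : Type u} (k : 𝒳 → 𝒳 → ℝ) {m : ℕ} (X : Fin m → 𝒳) :
    Matrix (Fin m) (Fin m) ℝ :=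
  Matrix.of fun i j => k (X i) (X j)

/-- Kernel vector `k(x, X)`. -/
def kVec {𝒳 : Type u} (k : 𝒳 → 𝒳 → ℝ) {m : ℕ} (X : Fin m → 𝒳) (x : 𝒳) : Fin m → ℝ :=
  fun i => k x (X i)

/-- Posterior variance `σ²_Σ(x; X)`. -/
def postVar {𝒳 : Type u} (k : 𝒳 → 𝒳 → ℝ) {m : ℕ} (S : Matrix (Fin m) (Fin m) ℝ)
    (X : Fin m → 𝒳) (x : 𝒳) : ℝ :=
  k x x - kVec k X x ⬝ᵥ ((gramMat k X + S)⁻¹ *ᵥ kVec k X x)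

/-- Posterior standard deviation `σ_Σ(x; X)`. -/
def postStd {𝒳 : Type u} (k : 𝒳 → 𝒳 → ℝ) {m : ℕ} (S : Matrix (Fin m) (Fin m) ℝ)
    (X : Fin m → 𝒳) (x : 𝒳) : ℝ :=
  Real.sqrt (postVar k S X x)

/-- Posterior mean `μ_Σ(x; X, y)`. -/
def postMean {𝒳 : Type u} (k : 𝒳 → 𝒳 → ℝ) {m : ℕ} (S : Matrix (Fin m) (Fin m) ℝ)
    (X : Fin m → 𝒳) (y : Fin m → ℝ) (x : 𝒳) : ℝ :=
  kVec k X x ⬝ᵥ ((gramMat k X + S)⁻¹ *ᵥ y)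

/-- Information gain `I_Σ(Z)`. -/
def infoGain {𝒳 : Type u} (k : 𝒳 → 𝒳 → ℝ) {m : ℕ} (S : Matrix (Fin m) (Fin m) ℝ)
    (Z : Fin m → 𝒳) : ℝ :=
  (1 / 2) * Real.log ((S + gramMat k Z).det / S.det)

/-- `k` is a symmetric positive semidefinite kernel. -/
def IsKernel {𝒳 : Type u} (k : 𝒳 → 𝒳 → ℝ) : Prop :=
  (∀ x y, k x y = k y x) ∧ ∀ (m : ℕ) (Z : Fin m → 𝒳), (gramMat k Z).PosSemidef

/-- Prefix of length `t` of a sequence of points. -/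
def preT {𝒳 : Type u} (x : ℕ → 𝒳) (t : ℕ) : Fin t → 𝒳 := fun i => x i.val


variable {𝒳 : Type u} {k : 𝒳 → 𝒳 → ℝ}

lemma preT_succ (z : ℕ → 𝒳) (t : ℕ) : preT z (t + 1) = Fin.snoc (preT z t) (z t) := by
  funext i
  refine Fin.lastCases ?_ (fun j => ?_) i <;> simp [preT]

lemma Matrix.PosSemidef.two_mul_dotProduct_sub_le {m : ℕ} {G : Matrix (Fin m) (Fin m) ℝ}
    (hG : G.PosSemidef) (hdet : G.det ≠ 0) (v a : Fin m → ℝ) :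
    2 * (a ⬝ᵥ v) - a ⬝ᵥ (G *ᵥ a) ≤ v ⬝ᵥ (G⁻¹ *ᵥ v) := by
  set w := G⁻¹ *ᵥ v
  have hGw : G *ᵥ w = v := by
    rw [mulVec_mulVec, mul_nonsing_inv _ (isUnit_iff_ne_zero.mpr hdet), one_mulVec]
  have hGt : Gᵀ = G := by simpa using hG.isHermitian.eq
  have hwGa : w ⬝ᵥ (G *ᵥ a) = a ⬝ᵥ v := by
    rw [dotProduct_mulVec, ← hGt, vecMul_transpose, hGw, dotProduct_comm]
  have h := hG.dotProduct_mulVec_nonneg (a - w)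
  simp only [star_trivial, mulVec_sub, sub_dotProduct, dotProduct_sub, hGw, hwGa] at h
  linarith [dotProduct_comm a v, dotProduct_comm w v]

/-- The variance of `f x - a ⬝ᵥ (f ∘ X)` for a centred Gaussian process `f` with covariance `k`;
the noiseless posterior variance is its minimum over `a`. -/
def residualVar (k : 𝒳 → 𝒳 → ℝ) {m : ℕ} (X : Fin m → 𝒳) (x : 𝒳) (a : Fin m → ℝ) : ℝ :=
  k x x - 2 * (a ⬝ᵥ kVec k X x) + a ⬝ᵥ (gramMat k X *ᵥ a)

lemma residualVar_nonneg (hk : IsKernel k) {m : ℕ} (X : Fin m → 𝒳) (x : 𝒳) (a : Fin m → ℝ) :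
    0 ≤ residualVar k X x a := by
  -- the quadratic form of the Gram matrix of `(x, X)` at `(1, -a)`
  have h := (hk.2 _ (Fin.cons x X)).dotProduct_mulVec_nonneg (Fin.cons 1 (-a))
  have hsymm : ∀ i, k (X i) x = k x (X i) := fun i => hk.1 _ _
  simp only [star_trivial, dotProduct, mulVec, gramMat, of_apply, Fin.sum_univ_succ,
    Fin.cons_zero, Fin.cons_succ, Pi.neg_apply, hsymm, mul_one, one_mul, mul_neg, neg_mul,
    Finset.sum_neg_distrib, mul_add, Finset.sum_add_distrib, Finset.mul_sum] at h
  rw [residualVar, two_mul]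
  simp only [dotProduct, mulVec, gramMat, kVec, of_apply, Finset.mul_sum]
  linarith [Finset.sum_congr rfl fun i (_ : i ∈ Finset.univ) => mul_comm (k x (X i)) (a i)]

lemma postVar_zero_le_residualVar (hk : IsKernel k) {m : ℕ} {X : Fin m → 𝒳}
    (hdet : (gramMat k X).det ≠ 0) (x : 𝒳) (a : Fin m → ℝ) :
    postVar k 0 X x ≤ residualVar k X x a := by
  have := (hk.2 m X).two_mul_dotProduct_sub_le hdet (kVec k X x) a
  rw [postVar, residualVar, add_zero]
  linarith

lemma residualVar_inv_mulVec {m : ℕ} {X : Fin m → 𝒳} (hdet : (gramMat k X).det ≠ 0) (x : 𝒳) :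
    residualVar k X x ((gramMat k X)⁻¹ *ᵥ kVec k X x) = postVar k 0 X x := by
  rw [residualVar, postVar, add_zero, mulVec_mulVec,
    mul_nonsing_inv _ (isUnit_iff_ne_zero.mpr hdet), one_mulVec, dotProduct_comm _ (kVec k X x)]
  ring

lemma postVar_zero_nonneg (hk : IsKernel k) {m : ℕ} {X : Fin m → 𝒳}
    (hdet : (gramMat k X).det ≠ 0) (x : 𝒳) : 0 ≤ postVar k 0 X x :=
  residualVar_inv_mulVec hdet x ▸ residualVar_nonneg hk X x _

lemma residualVar_snoc_zero {m : ℕ} (X : Fin m → 𝒳) (z x : 𝒳) (a : Fin m → ℝ) :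
    residualVar k (Fin.snoc X z) x (Fin.snoc a 0) = residualVar k X x a := by
  simp [residualVar, dotProduct, mulVec, gramMat, kVec, Fin.sum_univ_castSucc]

lemma postVar_zero_snoc_le (hk : IsKernel k) {m : ℕ} {X : Fin m → 𝒳} {z : 𝒳}
    (hdet' : (gramMat k (Fin.snoc X z)).det ≠ 0) (hdet : (gramMat k X).det ≠ 0) (x : 𝒳) :
    postVar k 0 (Fin.snoc X z) x ≤ postVar k 0 X x :=
  calc postVar k 0 (Fin.snoc X z) x
      ≤ residualVar k (Fin.snoc X z) x (Fin.snoc ((gramMat k X)⁻¹ *ᵥ kVec k X x) 0) :=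
        postVar_zero_le_residualVar hk hdet' x _
    _ = postVar k 0 X x := by rw [residualVar_snoc_zero, residualVar_inv_mulVec hdet]

lemma postVar_zero_preT_antitone (hk : IsKernel k) (z : ℕ → 𝒳) {T : ℕ}
    (hdet : ∀ t ≤ T, (gramMat k (preT z t)).det ≠ 0) {t : ℕ} (ht : t ≤ T) (x : 𝒳) :
    postVar k 0 (preT z T) x ≤ postVar k 0 (preT z t) x := by
  induction T, ht using Nat.le_induction with
  | base => exact le_rfl
  | succ n _ ih =>
    calc postVar k 0 (preT z (n + 1)) x ≤ postVar k 0 (preT z n) x := by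
          rw [preT_succ]
          exact postVar_zero_snoc_le hk (preT_succ z n ▸ hdet _ le_rfl) (hdet n (by omega)) x
      _ ≤ postVar k 0 (preT z t) x := ih fun s hs => hdet s (by omega)

lemma IsKernel.gramMat_add_smul_one_posDef (hk : IsKernel k) {c : ℝ} (hc : 0 < c) {m : ℕ}
    (X : Fin m → 𝒳) : (gramMat k X + c • 1).PosDef :=
  PosDef.posSemidef_add (hk.2 m X) (PosDef.one.smul hc)

lemma residualVar_le_postVar_smul_one (hk : IsKernel k) {c : ℝ} (hc : 0 < c) {m : ℕ}
    (X : Fin m → 𝒳) (x : 𝒳) :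
    residualVar k X x ((gramMat k X + c • 1)⁻¹ *ᵥ kVec k X x) ≤ postVar k (c • 1) X x := by
  set w := (gramMat k X + c • 1)⁻¹ *ᵥ kVec k X x
  have hGw : (gramMat k X + c • 1) *ᵥ w = kVec k X x := by
    rw [mulVec_mulVec, mul_nonsing_inv _ (hk.gramMat_add_smul_one_posDef hc X).det_pos.ne'.isUnit,
      one_mulVec]
  rw [add_mulVec, smul_mulVec, one_mulVec] at hGw
  have hww : w ⬝ᵥ (gramMat k X *ᵥ w) + c * (w ⬝ᵥ w) = w ⬝ᵥ kVec k X x := by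
    rw [← hGw, dotProduct_add, dotProduct_smul, smul_eq_mul]
  have hw : 0 ≤ w ⬝ᵥ w := by simpa using dotProduct_star_self_nonneg w
  rw [postVar, residualVar, dotProduct_comm (kVec k X x)]
  nlinarith

lemma postVar_smul_one_nonneg (hk : IsKernel k) {c : ℝ} (hc : 0 < c) {m : ℕ}
    (X : Fin m → 𝒳) (x : 𝒳) : 0 ≤ postVar k (c • 1) X x :=
  (residualVar_nonneg hk X x _).trans (residualVar_le_postVar_smul_one hk hc X x)

lemma postVar_zero_le_postVar_smul_one (hk : IsKernel k) {c : ℝ} (hc : 0 < c) {m : ℕ}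
    {X : Fin m → 𝒳} (hdet : (gramMat k X).det ≠ 0) (x : 𝒳) :
    postVar k 0 X x ≤ postVar k (c • 1) X x :=
  (postVar_zero_le_residualVar hk hdet x _).trans (residualVar_le_postVar_smul_one hk hc X x)

lemma gramMat_snoc_add_smul_one_submatrix (hsymm : ∀ x y, k x y = k y x) {m : ℕ}
    (X : Fin m → 𝒳) (z : 𝒳) (c : ℝ) :
    (gramMat k (Fin.snoc X z) + c • 1).submatrix finSumFinEquiv finSumFinEquiv
      = fromBlocks (gramMat k X + c • 1) (replicateCol (Fin 1) (kVec k X z))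
          (replicateRow (Fin 1) (kVec k X z)) (of fun _ _ => k z z + c) := by
  have hleft : ∀ i : Fin m, (finSumFinEquiv (Sum.inl i) : Fin (m + 1)) = Fin.castSucc i :=
    fun _ => rfl
  have hright : ∀ j : Fin 1, (finSumFinEquiv (Sum.inr j) : Fin (m + 1)) = Fin.last m := by
    intro j; rw [Subsingleton.elim j 0]; rfl
  ext (i | i) (j | j)
  · simp [gramMat, hleft, one_apply]
  · simp [gramMat, kVec, hleft, hright, one_apply, hsymm (X i) z]
  · simp [gramMat, kVec, hleft, hright, one_apply, (Fin.castSucc_ne_last j).symm]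
  · simp [gramMat, hright]

/-- The Schur complement of the block `K(X) + c • 1` is `c + σ²_{c • 1}(z; X)`. -/
lemma det_gramMat_snoc_add_smul_one (hsymm : ∀ x y, k x y = k y x) {c : ℝ} {m : ℕ}
    {X : Fin m → 𝒳} (hdet : (gramMat k X + c • 1).det ≠ 0) (z : 𝒳) :
    (gramMat k (Fin.snoc X z) + c • 1).det
      = (gramMat k X + c • 1).det * (c + postVar k (c • 1) X z) := by
  have := invertibleOfIsUnitDet _ (isUnit_iff_ne_zero.mpr hdet)
  rw [← det_submatrix_equiv_self finSumFinEquiv, gramMat_snoc_add_smul_one_submatrix hsymm,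
    det_fromBlocks₁₁, invOf_eq_nonsing_inv, Matrix.mul_assoc, ← replicateCol_mulVec,
    replicateRow_mul_replicateCol, det_fin_one]
  simp only [Matrix.sub_apply, of_apply, postVar]
  ring

lemma det_gramMat_preT_add_smul_one (hk : IsKernel k) {c : ℝ} (hc : 0 < c) (z : ℕ → 𝒳) (T : ℕ) :
    (gramMat k (preT z T) + c • 1).det
      = ∏ t ∈ Finset.range T, (c + postVar k (c • 1) (preT z t) (z t)) := by
  induction T with
  | zero => simp
  | succ n ih =>
    rw [preT_succ, det_gramMat_snoc_add_smul_one hk.1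
      (hk.gramMat_add_smul_one_posDef hc _).det_pos.ne', ih, Finset.prod_range_succ]

lemma infoGain_smul_one_preT (hk : IsKernel k) {c : ℝ} (hc : 0 < c) (z : ℕ → 𝒳) (T : ℕ) :
    infoGain k (c • 1) (preT z T)
      = (1 / 2) * ∑ t ∈ Finset.range T, log (1 + postVar k (c • 1) (preT z t) (z t) / c) := by
  have hpos : ∀ t, 0 < 1 + postVar k (c • 1) (preT z t) (z t) / c := fun t => by
    have := postVar_smul_one_nonneg hk hc (preT z t) (z t)
    positivity
  have hfac : ∀ t, (c + postVar k (c • 1) (preT z t) (z t)) / c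
      = 1 + postVar k (c • 1) (preT z t) (z t) / c := fun t => by rw [add_div, div_self hc.ne']
  rw [infoGain, add_comm, det_gramMat_preT_add_smul_one hk hc, det_smul, det_one, mul_one,
    Fintype.card_fin, show c ^ T = ∏ _t ∈ Finset.range T, c by simp, ← Finset.prod_div_distrib]
  simp only [hfac]
  rw [Real.log_prod fun t _ => (hpos t).ne']

lemma mul_log_two_le_infoGain_of_maxVar (hk : IsKernel k) (z : ℕ → 𝒳) {T : ℕ}
    (hdet : ∀ t ≤ T, (gramMat k (preT z t)).det ≠ 0)
    (hmax : ∀ t < T, ∀ x, postStd k 0 (preT z t) x ≤ postStd k 0 (preT z t) (z t))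
    {x : 𝒳} (hs : 0 < postVar k 0 (preT z T) x) :
    T * log 2 / 2 ≤ infoGain k (postVar k 0 (preT z T) x • 1) (preT z T) := by
  set s := postVar k 0 (preT z T) x
  have hstep : ∀ t < T, s ≤ postVar k (s • 1) (preT z t) (z t) := fun t ht =>
    calc s ≤ postVar k 0 (preT z t) x := postVar_zero_preT_antitone hk z hdet ht.le x
      _ ≤ postVar k 0 (preT z t) (z t) :=
        (Real.sqrt_le_sqrt_iff (postVar_zero_nonneg hk (hdet t ht.le) _)).mp (hmax t ht x)
      _ ≤ postVar k (s • 1) (preT z t) (z t) :=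
        postVar_zero_le_postVar_smul_one hk hs (hdet t ht.le) _
  have hterm : ∀ t ∈ Finset.range T,
      log 2 ≤ log (1 + postVar k (s • 1) (preT z t) (z t) / s) := fun t ht => by
    have := (one_le_div hs).mpr (hstep t (Finset.mem_range.mp ht))
    exact Real.log_le_log two_pos (by linarith)
  rw [infoGain_smul_one_preT hk hs]
  have := Finset.card_nsmul_le_sum _ _ _ hterm
  rw [Finset.card_range, nsmul_eq_mul] at this
  linarith

lemma log_one_add_le_of_le_rpow {T y p : ℝ} (hT : 2 ≤ T) (hp : 0 ≤ p) (hy₀ : 0 ≤ y)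
    (hy : y ≤ T ^ (1 + p)) : log (1 + y) ≤ (2 + p) * log T := by
  have hT₀ : 0 < T := by linarith
  have h1 : 1 ≤ T ^ (1 + p) := Real.one_le_rpow (by linarith) (by linarith)
  have hpow : T ^ (2 + p) = T * T ^ (1 + p) := by
    rw [show 2 + p = 1 + (1 + p) by ring, Real.rpow_add hT₀, Real.rpow_one]
  rw [← Real.log_rpow hT₀]
  refine Real.log_le_log (by linarith) ?_
  rw [hpow]
  nlinarith

lemma sq_exp_mul_rpow_neg_mul_log_rpow {T : ℝ} (hT : 1 < T) (M q : ℝ) :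
    (exp M * T ^ (-q) * log T ^ q) ^ 2
      = exp (2 * M - 2 * q * log T + 2 * q * log (log T)) := by
  rw [Real.rpow_def_of_pos (by linarith), Real.rpow_def_of_pos (Real.log_pos hT), ← Real.exp_add,
    ← Real.exp_add, sq, ← Real.exp_add]
  ring_nf

lemma log_le_of_le_mul_rpow_mul_log_rpow {a r c T s : ℝ} (ha : 0 < a) (hr : 0 < r) (hc : 0 < c)
    (hT : 0 < T) (hs : 0 < s)
    (h : T ≤ c * (T / s) ^ (a / (2 * r + a)) * log (1 + T / s) ^ (2 * r / (2 * r + a))) :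
    log s ≤ (1 + 2 * (r / a)) * log c - 2 * (r / a) * log T
      + 2 * (r / a) * log (log (1 + T / s)) := by
  have hθ : (1 + 2 * (r / a)) * (a / (2 * r + a)) = 1 := by field_simp; ring
  have hθ' : (1 + 2 * (r / a)) * (2 * r / (2 * r + a)) = 2 * (r / a) := by field_simp; ring
  have hL : 0 < log (1 + T / s) := Real.log_pos (by have := div_pos hT hs; linarith)
  have hlog := Real.log_le_log hT h
  rw [Real.log_mul (by positivity) (by positivity), Real.log_mul hc.ne' (by positivity),
    Real.log_rpow (by positivity), Real.log_rpow hL, Real.log_div hT.ne' hs.ne'] at hlog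
  -- in logarithms the hypothesis is linear, and multiplying by `1 + 2r/a` isolates `log s`
  linear_combination mul_le_mul_of_nonneg_left hlog (by positivity : (0 : ℝ) ≤ 1 + 2 * (r / a))
    + (log T - log s) * hθ + log (log (1 + T / s)) * hθ'

lemma exists_sq_bound_of_le_mul_rpow_mul_log_rpow {a r c : ℝ} (ha : 0 < a) (hr : 0 < r)
    (hc : 0 < c) :
    ∃ C > 0, ∀ T s : ℝ, 2 ≤ T → 0 < s →
      T ≤ c * (T / s) ^ (a / (2 * r + a)) * log (1 + T / s) ^ (2 * r / (2 * r + a)) →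
      s ≤ (C * T ^ (-(r / a)) * log T ^ (r / a)) ^ 2 := by
  set p := 2 * (r / a)
  have hp : 0 < p := by positivity
  set M := max (((1 + p) * log c + p * log (2 + p)) / 2)
    (-(p * log (log 2)) / 2)
  have hM₁ : (1 + p) * log c + p * log (2 + p) ≤ 2 * M := by
    linarith [le_max_left (((1 + p) * log c + p * log (2 + p)) / 2)
      (-(p * log (log 2)) / 2)]
  have hM₂ : -(p * log (log 2)) ≤ 2 * M := by
    linarith [le_max_right (((1 + p) * log c + p * log (2 + p)) / 2)
      (-(p * log (log 2)) / 2)]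
  refine ⟨exp M, Real.exp_pos M, fun T s hT hs h => ?_⟩
  have hT₀ : 0 < T := by linarith
  have hlog2 : 0 < log 2 := Real.log_pos one_lt_two
  have hlogT : log 2 ≤ log T := Real.log_le_log two_pos hT
  have hloglog := mul_le_mul_of_nonneg_left (Real.log_le_log hlog2 hlogT) hp.le
  have hlog := log_le_of_le_mul_rpow_mul_log_rpow ha hr hc hT₀ hs h
  rw [sq_exp_mul_rpow_neg_mul_log_rpow (by linarith), ← Real.log_le_iff_le_exp hs]
  change log s ≤ 2 * M - p * log T + p * log (log T)
  by_cases hsmall : log s ≤ -(p * log T)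
  · linarith
  have hTs : T / s ≤ T ^ (1 + p) := by
    rw [← Real.log_le_log_iff (by positivity) (by positivity), Real.log_div hT₀.ne' hs.ne',
      Real.log_rpow hT₀]
    linarith
  have hLT : log (log (1 + T / s)) ≤ log (2 + p) + log (log T) := by
    rw [← Real.log_mul (by positivity) (by linarith)]
    refine Real.log_le_log (Real.log_pos ?_)
      (log_one_add_le_of_le_rpow hT hp.le (by positivity) hTs)
    have := div_pos hT₀ hs
    linarith
  linarith [mul_le_mul_of_nonneg_left hLT hp.le]

lemma Real.rpow_le_rpow_sub_mul_rpow {x₀ x r q : ℝ} (hx₀ : 0 < x₀) (hx : x₀ ≤ x) (hrq : r ≤ q) :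
    x ^ r ≤ x₀ ^ (r - q) * x ^ q := by
  have hx' : 0 < x := hx₀.trans_le hx
  calc x ^ r = x ^ (r - q) * x ^ q := by rw [← Real.rpow_add hx', sub_add_cancel]
    _ ≤ x₀ ^ (r - q) * x ^ q :=
      mul_le_mul_of_nonneg_right (Real.rpow_le_rpow_of_nonpos hx₀ hx (by linarith)) (by positivity)

theorem exists_postStd_preT_le_of_maxVar {a r Cb : ℝ} (ha : 0 < a) (hr : 0 < r) (hCb : 0 < Cb) :
    ∃ C > 0, ∀ (𝒳 : Type u) (k : 𝒳 → 𝒳 → ℝ), IsKernel k → ∀ (z : ℕ → 𝒳) (T : ℕ), 2 ≤ T →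
      (∀ l : ℝ, 0 < l → infoGain k ((l ^ 2) • 1) (preT z T)
        ≤ Cb * ((T : ℝ) / l ^ 2) ^ (a / (2 * r + a))
          * log (1 + (T : ℝ) / l ^ 2) ^ (2 * r / (2 * r + a))) →
      (∀ t ≤ T, (gramMat k (preT z t)).det ≠ 0) →
      (∀ t < T, ∀ x, postStd k 0 (preT z t) x ≤ postStd k 0 (preT z t) (z t)) →
      ∀ x, postStd k 0 (preT z T) x ≤ C * (T : ℝ) ^ (-(r / a)) * log T ^ (r / a) := by
  have hlog2 : 0 < log 2 := log_pos one_lt_two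
  obtain ⟨C, hC, hbound⟩ :=
    exists_sq_bound_of_le_mul_rpow_mul_log_rpow ha hr (c := 2 * Cb / log 2) (by positivity)
  refine ⟨C, hC, fun 𝒳 k hk z T hT hIG hdet hmax x => ?_⟩
  rcases (postVar_zero_nonneg hk (hdet T le_rfl) x).eq_or_lt with hs | hs
  · rw [postStd, ← hs, Real.sqrt_zero]
    positivity
  rw [postStd, Real.sqrt_le_left (by positivity)]
  refine hbound T _ (by exact_mod_cast hT) hs ?_
  have hgain := mul_log_two_le_infoGain_of_maxVar hk z hdet hmax hs
  have hIGT := hIG _ (Real.sqrt_pos.mpr hs)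
  rw [Real.sq_sqrt hs.le] at hIGT
  rw [div_mul_eq_mul_div, div_mul_eq_mul_div, le_div_iff₀ hlog2]
  linarith

/-- noiseless simple regret of MVR, Matérn case, under a valid
deterministic confidence bound; `C'` depends only on `C̄`, `ν`, `d`, `α`. -/
theorem noiseless_mvr_simple_regret_Matern
    (d : ℕ) (hd : 0 < d) (ν : ℝ) (hν : 1 / 2 < ν) (α : ℝ) (hα : 0 < α)
    (Cb : ℝ) (hCb : 0 < Cb) (B : ℝ) (hB : 0 < B) :
    ∃ C' : ℝ, 0 < C' ∧
      ∀ (𝒳 : Type u) (k : 𝒳 → 𝒳 → ℝ), IsKernel k →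
      (∀ m : ℕ, 0 < m → ∀ l : ℝ, 0 < l → ∀ Z : Fin m → 𝒳,
        infoGain k ((l ^ 2) • (1 : Matrix (Fin m) (Fin m) ℝ)) Z
          ≤ Cb * ((m : ℝ) / l ^ 2) ^ ((d : ℝ) / (2 * ν + (d : ℝ)))
              * (Real.log (1 + (m : ℝ) / l ^ 2)) ^ (2 * ν / (2 * ν + (d : ℝ)))) →
      ∀ f : 𝒳 → ℝ, (∀ x, |f x| ≤ B) →
      (∀ (m : ℕ) (X : Fin m → 𝒳), (gramMat k X).det ≠ 0 → ∀ x : 𝒳,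
        |f x - postMean k (0 : Matrix (Fin m) (Fin m) ℝ) X (fun i => f (X i)) x|
          ≤ B * postStd k (0 : Matrix (Fin m) (Fin m) ℝ) X x) →
      ∀ (xs : ℕ → ℕ → 𝒳) (xhat : ℕ → 𝒳),
      (∀ T : ℕ, 0 < T → ∀ t ≤ T, (gramMat k (preT (xs T) t)).det ≠ 0) →
      (∀ T : ℕ, 0 < T → ∀ t < T, ∀ x : 𝒳,
        postStd k (0 : Matrix (Fin t) (Fin t) ℝ) (preT (xs T) t) x
          ≤ postStd k (0 : Matrix (Fin t) (Fin t) ℝ) (preT (xs T) t) (xs T t)) →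
      (∀ T : ℕ, 0 < T → ∀ x : 𝒳,
        postMean k (0 : Matrix (Fin T) (Fin T) ℝ) (preT (xs T) T)
            (fun i : Fin T => f (xs T i.val)) x
          ≤ postMean k (0 : Matrix (Fin T) (Fin T) ℝ) (preT (xs T) T)
              (fun i : Fin T => f (xs T i.val)) (xhat T)) →
      ∀ T : ℕ, 2 ≤ T → ∀ xstar : 𝒳,
        f xstar - f (xhat T)
          ≤ C' * B * (T : ℝ) ^ (-(ν / (d : ℝ)))
              * (Real.log (T : ℝ)) ^ (ν * (1 + α) / (d : ℝ)) := by
  have hlog2 : 0 < log 2 := log_pos one_lt_two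
  obtain ⟨C, hC, hσ⟩ :=
    exists_postStd_preT_le_of_maxVar (a := d) (r := ν) (by positivity) (by linarith) hCb
  refine ⟨2 * C * log 2 ^ (ν / d - ν * (1 + α) / d), by positivity, ?_⟩
  intro 𝒳 k hk hIG f _ hconf xs xhat hdet hmax hmean T hT xstar
  have hT₀ : 0 < T := by omega
  have hσT := hσ 𝒳 k hk (xs T) T hT (hIG T hT₀ · · _) (hdet T hT₀) (hmax T hT₀)
  have hconfT : ∀ x, |f x - postMean k 0 (preT (xs T) T) (fun i : Fin T => f (xs T i.val)) x|
      ≤ B * postStd k 0 (preT (xs T) T) x := hconf T _ (hdet T hT₀ T le_rfl)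
  have hlogT : log T ^ (ν / d) ≤ log 2 ^ (ν / d - ν * (1 + α) / d) * log T ^ (ν * (1 + α) / d) :=
    Real.rpow_le_rpow_sub_mul_rpow hlog2 (log_le_log two_pos (by exact_mod_cast hT))
      (div_le_div_of_nonneg_right (by nlinarith) (Nat.cast_nonneg d))
  calc f xstar - f (xhat T)
      ≤ B * postStd k 0 (preT (xs T) T) xstar + B * postStd k 0 (preT (xs T) T) (xhat T) := by
        linarith [(abs_le.mp (hconfT xstar)).2, (abs_le.mp (hconfT (xhat T))).1, hmean T hT₀ xstar]
    _ ≤ B * (C * (T : ℝ) ^ (-(ν / d)) * log T ^ (ν / d))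
          + B * (C * (T : ℝ) ^ (-(ν / d)) * log T ^ (ν / d)) := by
        gcongr <;> exact hσT _
    _ = 2 * C * B * (T : ℝ) ^ (-(ν / d)) * log T ^ (ν / d) := by ring
    _ ≤ 2 * C * B * (T : ℝ) ^ (-(ν / d))
          * (log 2 ^ (ν / d - ν * (1 + α) / d) * log T ^ (ν * (1 + α) / d)) := by
        gcongr
    _ = _ := by ring
end
end

section
/- (Simple regret of variance-aware MVR under a valid confidence bound.) Fix T ∈ ℕ+ and ρ_1,…,ρ_T ≥ 0 with V := Σ_{t=1}^T ρ_t² > 0; set Σ_t := diag(ρ_1²,…,ρ_t²) and assume K(X_t,X_t)+Σ_t is invertible for every t ≤ T. Set λ̃_t² := max{ρ_t², V/T} and Σ̃_T := diag(λ̃_1²,…,λ̃_T²). Let x_1,…,x_T ∈ 𝒳 be chosen by maximum variance reduction: for every t ∈ [T] and x ∈ 𝒳, σ_{Σ_{t−1}}(x; X_{t−1}) ≤ σ_{Σ_{t−1}}(x_t; X_{t−1}). Suppose γ ≥ 0 satisfies I_{Σ̃_T}(Z) ≤ γ for every T-tuple Z of points of 𝒳, and T/2 ≥ 4γ. Let β^{1/2}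 ≥ 0, y ∈ ℝ^T, and f : 𝒳 → ℝ satisfy |f(x) − μ_{Σ_T}(x; X_T, y)| ≤ β^{1/2}·σ_{Σ_T}(x; X_T) for all x ∈ 𝒳, and let x̂ ∈ 𝒳 satisfy μ_{Σ_T}(x; X_T, y) ≤ μ_{Σ_T}(x̂; X_T, y) for all x ∈ 𝒳. Then for every x* ∈ 𝒳: f(x*) − f(x̂) ≤ (8·β^{1/2}/T)·√(2·V·γ). -/
/-!
With the inflated noise `λ̃ᵢ² = max (ρᵢ², V/T) ≥ ρᵢ²`, the Schur-complement chain rule for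
determinants writes the information gain of the selected points as `½ ∑ᵢ log (1 + rᵢ)`, where
`rᵢ = σ̃ᵢ² / λ̃ᵢ²` and `σ̃ᵢ²` is the posterior variance at `xᵢ` given `X_{i-1}` under noise `λ̃`.
Since `log (1 + r) > 1/2` for `r > 1`, at most `4γ ≤ T/2` rounds have `rᵢ > 1`; on the other
rounds `rᵢ ≤ 2 log (1 + rᵢ)`, so their `rᵢ` sum to at most `4γ`, and Cauchy–Schwarz with
`∑ λ̃ᵢ² ≤ 2V` bounds their `σ̃ᵢ` by `2 √(2Vγ)`.

The posterior variance is the minimum of a quadratic objective, so it grows with the noise and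
shrinks as data are added. Together with the MVR rule this gives `σ_T(x) ≤ σ̃ᵢ` for every round
`i`, hence `σ_T(x) ≤ 4 √(2Vγ) / T`, and the confidence bound at `x*` and `x̂` finishes the proof.
-/

open Matrix Real Finset

noncomputable section

universe u

theorem Matrix.PosSemidef.two_mul_dotProduct_sub_le_s18 {m : Type*} [Fintype m] [DecidableEq m]
    {M : Matrix m m ℝ} (hM : M.PosSemidef) (hdet : M.det ≠ 0) (v w : m → ℝ) :
    2 * (w ⬝ᵥ v) - w ⬝ᵥ (M *ᵥ w) ≤ v ⬝ᵥ (M⁻¹ *ᵥ v) := by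
  set u := M⁻¹ *ᵥ v
  have hMu : M *ᵥ u = v := by
    rw [mulVec_mulVec, mul_nonsing_inv M (isUnit_iff_ne_zero.mpr hdet), one_mulVec]
  have huMw : u ⬝ᵥ (M *ᵥ w) = w ⬝ᵥ v := by
    rw [dotProduct_mulVec, ← mulVec_transpose, (isHermitian_iff_isSymm.mp hM.1).eq, hMu,
      dotProduct_comm]
  have := hM.dotProduct_mulVec_nonneg (w - u)
  simp only [star_trivial, mulVec_sub, sub_dotProduct, dotProduct_sub, hMu, huMw] at this
  linarith [dotProduct_comm u v]

theorem Matrix.det_eq_det_submatrix_castSucc_mul {R : Type*} [CommRing R] {n : ℕ}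
    (A : Matrix (Fin (n + 1)) (Fin (n + 1)) R)
    (h : IsUnit (A.submatrix Fin.castSucc Fin.castSucc).det) :
    A.det = (A.submatrix Fin.castSucc Fin.castSucc).det *
      (A (Fin.last n) (Fin.last n) - (fun j => A (Fin.last n) j.castSucc) ⬝ᵥ
        ((A.submatrix Fin.castSucc Fin.castSucc)⁻¹ *ᵥ fun i => A i.castSucc (Fin.last n))) := by
  have := (A.submatrix Fin.castSucc Fin.castSucc).invertibleOfIsUnitDet h
  have h₁₁ : (A.submatrix finSumFinEquiv finSumFinEquiv).toBlocks₁₁ =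
      A.submatrix Fin.castSucc Fin.castSucc := rfl
  rw [← det_submatrix_equiv_self finSumFinEquiv, ← fromBlocks_toBlocks (A.submatrix _ _), h₁₁,
    det_fromBlocks₁₁, det_fin_one, invOf_eq_nonsing_inv]
  simp only [toBlocks₁₂, toBlocks₂₁, toBlocks₂₂, sub_apply, of_apply, submatrix_apply,
    mul_apply, dotProduct, mulVec, Finset.sum_mul, Finset.mul_sum, mul_assoc]
  rw [Finset.sum_comm]
  rfl

section ExtendByZero

variable {ι κ : Type*} [Fintype ι] [Fintype κ] {e : ι → κ}

theorem Function.Injective.extend_zero_dotProduct (he : e.Injective) (w : ι → ℝ) (v : κ → ℝ) :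
    Function.extend e w 0 ⬝ᵥ v = w ⬝ᵥ (v ∘ e) := by
  classical
  rw [dotProduct, ← Finset.sum_subset (Finset.subset_univ (Finset.univ.map ⟨e, he⟩)),
    Finset.sum_map]
  · simp [he.extend_apply, dotProduct]
  · intro j _ hj
    rw [Function.extend_apply' _ _ _ (by simpa using hj), Pi.zero_apply, zero_mul]

theorem Function.Injective.mulVec_extend_zero_comp (he : e.Injective) (M : Matrix κ κ ℝ)
    (w : ι → ℝ) : (M *ᵥ Function.extend e w 0) ∘ e = M.submatrix e e *ᵥ w := by
  ext i
  rw [Function.comp_apply, mulVec, dotProduct_comm, he.extend_zero_dotProduct, mulVec,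
    dotProduct_comm]
  rfl

end ExtendByZero

section PosteriorVariance

variable {𝒳 : Type u} (k : 𝒳 → 𝒳 → ℝ) {m : ℕ}

/-- `σ²_Σ(x; X) = min_w (‖k(·, x) - ∑ᵢ wᵢ k(·, xᵢ)‖² + wᵀ Σ w)`, the minimum being attained at
`w = (K(X, X) + Σ)⁻¹ k(x, X)`; this is that objective, with the RKHS norm expanded through the kernel. -/
def postVarObjective (S : Matrix (Fin m) (Fin m) ℝ) (X : Fin m → 𝒳) (x : 𝒳)
    (w : Fin m → ℝ) : ℝ :=
  k x x - 2 * (w ⬝ᵥ kVec k X x) + w ⬝ᵥ ((gramMat k X + S) *ᵥ w)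

variable {k} {S : Matrix (Fin m) (Fin m) ℝ} {X : Fin m → 𝒳}

theorem postVarObjective_eq_gramMat_snoc (hk : ∀ x y, k x y = k y x) (x : 𝒳) (w : Fin m → ℝ) :
    postVarObjective k S X x w =
      (Fin.snoc (-w) 1 : Fin (m + 1) → ℝ) ⬝ᵥ
          (gramMat k (Fin.snoc X x : Fin (m + 1) → 𝒳) *ᵥ Fin.snoc (-w) 1) +
        w ⬝ᵥ (S *ᵥ w) := by
  simp only [postVarObjective, dotProduct, mulVec, gramMat, kVec, Matrix.add_apply, of_apply,
    Fin.sum_univ_castSucc, Fin.snoc_castSucc, Fin.snoc_last, Pi.neg_apply, mul_add, add_mul,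
    Finset.sum_add_distrib, neg_mul, mul_neg, Finset.sum_neg_distrib, mul_one, one_mul,
    Finset.mul_sum, hk x]
  have hcomm : ∑ i, k (X i) x * w i = ∑ i, w i * k (X i) x :=
    Finset.sum_congr rfl fun i _ => mul_comm _ _
  rw [hcomm, ← Finset.mul_sum]
  ring

theorem postVarObjective_nonneg (hk : IsKernel k) (hS : S.PosSemidef) (x : 𝒳) (w : Fin m → ℝ) :
    0 ≤ postVarObjective k S X x w := by
  rw [postVarObjective_eq_gramMat_snoc hk.1]
  have hK := (hk.2 _ (Fin.snoc X x)).dotProduct_mulVec_nonneg (Fin.snoc (-w) 1)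
  have hS' := hS.dotProduct_mulVec_nonneg w
  simp only [star_trivial] at hK hS'
  exact add_nonneg hK hS'

theorem postVar_le_postVarObjective (hpsd : (gramMat k X + S).PosSemidef)
    (hdet : (gramMat k X + S).det ≠ 0) (x : 𝒳) (w : Fin m → ℝ) :
    postVar k S X x ≤ postVarObjective k S X x w := by
  have := hpsd.two_mul_dotProduct_sub_le_s18 hdet (kVec k X x) w
  unfold postVar postVarObjective
  linarith

theorem postVar_eq_postVarObjective (hdet : (gramMat k X + S).det ≠ 0) (x : 𝒳) :
    postVar k S X x = postVarObjective k S X x ((gramMat k X + S)⁻¹ *ᵥ kVec k X x) := by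
  rw [postVarObjective, mulVec_mulVec, mul_nonsing_inv _ (isUnit_iff_ne_zero.mpr hdet),
    one_mulVec, dotProduct_comm _ (kVec k X x), postVar]
  ring

theorem postVar_nonneg (hk : IsKernel k) (hS : S.PosSemidef) (hdet : (gramMat k X + S).det ≠ 0)
    (x : 𝒳) : 0 ≤ postVar k S X x :=
  (postVar_eq_postVarObjective hdet x).symm ▸ postVarObjective_nonneg hk hS x _

theorem postVar_mono {S' : Matrix (Fin m) (Fin m) ℝ} (hk : IsKernel k) (hS : S.PosSemidef)
    (hSS' : (S' - S).PosSemidef) (hdet : (gramMat k X + S).det ≠ 0)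
    (hdet' : (gramMat k X + S').det ≠ 0) (x : 𝒳) :
    postVar k S X x ≤ postVar k S' X x := by
  set w := (gramMat k X + S')⁻¹ *ᵥ kVec k X x
  have hgap := hSS'.dotProduct_mulVec_nonneg w
  have hobj : postVarObjective k S' X x w =
      postVarObjective k S X x w + star w ⬝ᵥ ((S' - S) *ᵥ w) := by
    simp only [postVarObjective, star_trivial, add_mulVec, sub_mulVec, dotProduct_add,
      dotProduct_sub]
    ring
  calc postVar k S X x ≤ postVarObjective k S X x w :=
        postVar_le_postVarObjective ((hk.2 m X).add hS) hdet x w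
    _ ≤ postVarObjective k S' X x w := by linarith
    _ = postVar k S' X x := (postVar_eq_postVarObjective hdet' x).symm

theorem postVarObjective_extend_zero {t : ℕ} {e : Fin t → Fin m} (he : e.Injective) (x : 𝒳)
    (w : Fin t → ℝ) :
    postVarObjective k S X x (Function.extend e w 0) =
      postVarObjective k (S.submatrix e e) (X ∘ e) x w := by
  rw [postVarObjective, he.extend_zero_dotProduct, he.extend_zero_dotProduct,
    he.mulVec_extend_zero_comp]
  rfl

theorem postVar_le_postVar_comp {t : ℕ} {e : Fin t → Fin m} (he : e.Injective)
    (hpsd : (gramMat k X + S).PosSemidef) (hdet : (gramMat k X + S).det ≠ 0)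
    (hdet_e : (gramMat k (X ∘ e) + S.submatrix e e).det ≠ 0) (x : 𝒳) :
    postVar k S X x ≤ postVar k (S.submatrix e e) (X ∘ e) x := by
  rw [postVar_eq_postVarObjective hdet_e, ← postVarObjective_extend_zero he]
  exact postVar_le_postVarObjective hpsd hdet x _

end PosteriorVariance

section InformationGain

variable {𝒳 : Type u} {k : 𝒳 → 𝒳 → ℝ}

theorem posDef_gramMat_add_diagonal (hk : IsKernel k) {m : ℕ} (X : Fin m → 𝒳) {d : Fin m → ℝ}
    (hd : ∀ i, 0 < d i) : (gramMat k X + diagonal d).PosDef :=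
  PosDef.posSemidef_add (hk.2 m X) (posDef_diagonal_iff.mpr hd)

theorem postVar_diagonal_nonneg (hk : IsKernel k) {m : ℕ} (X : Fin m → 𝒳) {d : Fin m → ℝ}
    (hd : ∀ i, 0 < d i) (x : 𝒳) : 0 ≤ postVar k (diagonal d) X x :=
  postVar_nonneg hk (PosSemidef.diagonal fun i => (hd i).le)
    (posDef_gramMat_add_diagonal hk X hd).det_pos.ne' x

theorem det_gramMat_add_diagonal_succ (hk : ∀ x y, k x y = k y x) {n : ℕ}
    (X : Fin (n + 1) → 𝒳) (d : Fin (n + 1) → ℝ)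
    (h : (gramMat k (X ∘ Fin.castSucc) + diagonal (d ∘ Fin.castSucc)).det ≠ 0) :
    (gramMat k X + diagonal d).det =
      (gramMat k (X ∘ Fin.castSucc) + diagonal (d ∘ Fin.castSucc)).det *
        (d (Fin.last n) +
          postVar k (diagonal (d ∘ Fin.castSucc)) (X ∘ Fin.castSucc) (X (Fin.last n))) := by
  have hsub : (gramMat k X + diagonal d).submatrix Fin.castSucc Fin.castSucc =
      gramMat k (X ∘ Fin.castSucc) + diagonal (d ∘ Fin.castSucc) := by
    ext i j
    simp [gramMat, diagonal_apply]
  have hrow : (fun j => (gramMat k X + diagonal d) (Fin.last n) j.castSucc) =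
      kVec k (X ∘ Fin.castSucc) (X (Fin.last n)) := by
    ext j
    simp [gramMat, kVec, (Fin.castSucc_ne_last j).symm]
  have hcol : (fun i => (gramMat k X + diagonal d) i.castSucc (Fin.last n)) =
      kVec k (X ∘ Fin.castSucc) (X (Fin.last n)) := by
    ext i
    simp [gramMat, kVec, Fin.castSucc_ne_last i, hk (X i.castSucc)]
  rw [det_eq_det_submatrix_castSucc_mul _ (hsub ▸ isUnit_iff_ne_zero.mpr h), hsub, hrow, hcol,
    postVar]
  simp only [Matrix.add_apply, diagonal_apply_eq, gramMat, of_apply, Function.comp_apply]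
  ring

theorem det_gramMat_preT_add_diagonal (hk : IsKernel k) (xs : ℕ → 𝒳) {l : ℕ → ℝ}
    (hl : ∀ i, 0 < l i) (n : ℕ) :
    (gramMat k (preT xs n) + diagonal fun i : Fin n => l i).det =
      ∏ i ∈ range n, (l i + postVar k (diagonal fun j : Fin i => l j) (preT xs i) (xs i)) := by
  induction n with
  | zero => simp
  | succ n ih =>
    rw [det_gramMat_add_diagonal_succ hk.1 _ _
      (posDef_gramMat_add_diagonal hk _ fun i => hl i).det_pos.ne', prod_range_succ, ← ih]
    rfl

theorem infoGain_preT_eq_sum_log (hk : IsKernel k) (xs : ℕ → 𝒳) {l : ℕ → ℝ}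
    (hl : ∀ i, 0 < l i) (T : ℕ) :
    infoGain k (diagonal fun i : Fin T => l i) (preT xs T) =
      (1 / 2) * ∑ i ∈ range T,
        log (1 + postVar k (diagonal fun j : Fin i => l j) (preT xs i) (xs i) / l i) := by
  have hpv i := postVar_diagonal_nonneg hk (preT xs i) (fun j : Fin i => hl j) (xs i)
  rw [infoGain, add_comm, det_gramMat_preT_add_diagonal hk xs hl, det_diagonal,
    Fin.prod_univ_eq_prod_range (fun i => l i), ← prod_div_distrib,
    log_prod fun i _ => (div_pos (add_pos_of_pos_of_nonneg (hl i) (hpv i)) (hl i)).ne']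
  congr 1
  refine sum_congr rfl fun i _ => ?_
  rw [add_div, div_self (hl i).ne']

end InformationGain

section Sequential

variable {𝒳 : Type u} {k : 𝒳 → 𝒳 → ℝ} (xs : ℕ → 𝒳) {d : ℕ → ℝ}

theorem postVar_preT_le_of_le (hk : IsKernel k) (hd : ∀ i, 0 ≤ d i) {i T : ℕ} (hiT : i ≤ T)
    (hdet_i : (gramMat k (preT xs i) + diagonal fun j : Fin i => d j).det ≠ 0)
    (hdet_T : (gramMat k (preT xs T) + diagonal fun j : Fin T => d j).det ≠ 0) (x : 𝒳) :
    postVar k (diagonal fun j : Fin T => d j) (preT xs T) x ≤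
      postVar k (diagonal fun j : Fin i => d j) (preT xs i) x := by
  have hsub : (diagonal fun j : Fin T => d j).submatrix (Fin.castLE hiT) (Fin.castLE hiT) =
      diagonal fun j : Fin i => d j :=
    submatrix_diagonal _ _ (Fin.castLE_injective hiT)
  have := postVar_le_postVar_comp (Fin.castLE_injective hiT)
    ((hk.2 T _).add (PosSemidef.diagonal fun j => hd j)) hdet_T (hsub ▸ hdet_i) x
  rwa [hsub] at this

theorem postStd_preT_le_sqrt_postVar (hk : IsKernel k) (hd : ∀ i, 0 ≤ d i) {l : ℕ → ℝ}
    (hdl : ∀ i, d i ≤ l i) (hl : ∀ i, 0 < l i) {i T : ℕ} (hiT : i ≤ T)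
    (hdet_i : (gramMat k (preT xs i) + diagonal fun j : Fin i => d j).det ≠ 0)
    (hdet_T : (gramMat k (preT xs T) + diagonal fun j : Fin T => d j).det ≠ 0)
    (hmax : ∀ x, postStd k (diagonal fun j : Fin i => d j) (preT xs i) x ≤
      postStd k (diagonal fun j : Fin i => d j) (preT xs i) (xs i)) (x : 𝒳) :
    postStd k (diagonal fun j : Fin T => d j) (preT xs T) x ≤
      √(postVar k (diagonal fun j : Fin i => l j) (preT xs i) (xs i)) := by
  calc postStd k (diagonal fun j : Fin T => d j) (preT xs T) x
      ≤ postStd k (diagonal fun j : Fin i => d j) (preT xs i) x :=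
        sqrt_le_sqrt (postVar_preT_le_of_le xs hk hd hiT hdet_i hdet_T x)
    _ ≤ postStd k (diagonal fun j : Fin i => d j) (preT xs i) (xs i) := hmax x
    _ ≤ √(postVar k (diagonal fun j : Fin i => l j) (preT xs i) (xs i)) := by
        refine sqrt_le_sqrt (postVar_mono hk (PosSemidef.diagonal fun j => hd j) ?_ hdet_i
          (posDef_gramMat_add_diagonal hk _ fun j => hl j).det_pos.ne' _)
        rw [diagonal_sub]
        exact PosSemidef.diagonal fun j => sub_nonneg.mpr (hdl j)

end Sequential

theorem le_two_mul_log_one_add {x : ℝ} (h0 : 0 ≤ x) (h1 : x ≤ 1) : x ≤ 2 * log (1 + x) := by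
  have hpos : 0 < 1 + x := by linarith
  have hinv : (1 + x)⁻¹ ≤ 1 - x / 2 := by
    rw [inv_le_iff_one_le_mul₀ hpos]
    nlinarith
  linarith [one_sub_inv_le_log_of_pos hpos]

theorem one_half_lt_log_one_add {x : ℝ} (h : 1 < x) : 1 / 2 < log (1 + x) :=
  calc (1 / 2 : ℝ) < log 2 := by linarith [log_two_gt_d9]
    _ < log (1 + x) := log_lt_log two_pos (by linarith)

section Counting

variable {ι : Type*} {s : Finset ι} {r : ι → ℝ} {γ : ℝ}

theorem card_le_two_mul_card_filter_le_one (hr : ∀ i ∈ s, 0 ≤ r i)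
    (hlog : ∑ i ∈ s, log (1 + r i) ≤ 2 * γ) (hγ : 8 * γ ≤ #s) :
    (#s : ℝ) ≤ 2 * #{i ∈ s | r i ≤ 1} := by
  have hlog_nonneg : ∀ i ∈ s, 0 ≤ log (1 + r i) := fun i hi =>
    log_nonneg (by linarith [hr i hi])
  have hbad : #{i ∈ s | ¬r i ≤ 1} * (1 / 2 : ℝ) ≤ 2 * γ :=
    calc #{i ∈ s | ¬r i ≤ 1} * (1 / 2 : ℝ) = ∑ i ∈ s with ¬r i ≤ 1, 1 / 2 := by
          rw [sum_const, nsmul_eq_mul]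
      _ ≤ ∑ i ∈ s with ¬r i ≤ 1, log (1 + r i) := sum_le_sum fun i hi =>
          (one_half_lt_log_one_add (not_le.mp (mem_filter.mp hi).2)).le
      _ ≤ ∑ i ∈ s, log (1 + r i) := sum_le_sum_of_subset_of_nonneg (filter_subset _ _)
          fun i hi _ => hlog_nonneg i hi
      _ ≤ 2 * γ := hlog
  have hcard : (#{i ∈ s | r i ≤ 1} : ℝ) + #{i ∈ s | ¬r i ≤ 1} = #s := by
    exact_mod_cast card_filter_add_card_filter_not (fun i => r i ≤ 1)
  linarith

theorem sum_filter_le_one_le (hr : ∀ i ∈ s, 0 ≤ r i) (hlog : ∑ i ∈ s, log (1 + r i) ≤ 2 * γ) :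
    ∑ i ∈ s with r i ≤ 1, r i ≤ 4 * γ :=
  calc ∑ i ∈ s with r i ≤ 1, r i ≤ ∑ i ∈ s with r i ≤ 1, 2 * log (1 + r i) :=
        sum_le_sum fun i hi => by
          obtain ⟨hi, hi1⟩ := mem_filter.mp hi
          exact le_two_mul_log_one_add (hr i hi) hi1
    _ ≤ ∑ i ∈ s, 2 * log (1 + r i) := sum_le_sum_of_subset_of_nonneg (filter_subset _ _)
        fun i hi _ => mul_nonneg zero_le_two (log_nonneg (by linarith [hr i hi]))
    _ ≤ 4 * γ := by rw [← mul_sum]; linarith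

theorem le_four_div_card_mul_sqrt {a l : ι → ℝ} {L σ : ℝ} (ha : ∀ i ∈ s, 0 ≤ a i)
    (hl : ∀ i ∈ s, 0 < l i) (hL : ∑ i ∈ s, l i ≤ L)
    (hlog : ∑ i ∈ s, log (1 + a i / l i) ≤ 2 * γ) (hγ : 8 * γ ≤ #s) (hs : s.Nonempty)
    (hσ : ∀ i ∈ s, σ ≤ √(a i)) :
    σ ≤ 4 / #s * √(L * γ) := by
  set G := {i ∈ s | a i / l i ≤ 1}
  have hr : ∀ i ∈ s, 0 ≤ a i / l i := fun i hi => div_nonneg (ha i hi) (hl i hi).le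
  have hGs : G ⊆ s := filter_subset _ _
  have hcard := card_le_two_mul_card_filter_le_one hr hlog hγ
  have hlG : ∑ i ∈ G, l i ≤ L := (sum_le_sum_of_subset_of_nonneg hGs
    fun i hi _ => (hl i hi).le).trans hL
  have hcs : (∑ i ∈ G, √(a i)) ^ 2 ≤ (∑ i ∈ G, l i) * ∑ i ∈ G, a i / l i :=
    sum_sq_le_sum_mul_sum_of_sq_le_mul G (fun i hi => (hl i (hGs hi)).le)
      (fun i hi => hr i (hGs hi)) fun i hi => by
        rw [sq_sqrt (ha i (hGs hi)), mul_div_cancel₀ _ (hl i (hGs hi)).ne']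
  have hsqrt : ∑ i ∈ G, √(a i) ≤ 2 * √(L * γ) := by
    have hlG_nonneg : 0 ≤ ∑ i ∈ G, l i := sum_nonneg fun i hi => (hl i (hGs hi)).le
    have hbound : (∑ i ∈ G, √(a i)) ^ 2 ≤ 2 ^ 2 * (L * γ) :=
      calc _ ≤ (∑ i ∈ G, l i) * ∑ i ∈ G, a i / l i := hcs
        _ ≤ L * (4 * γ) := mul_le_mul hlG (sum_filter_le_one_le hr hlog)
            (sum_nonneg fun i hi => hr i (hGs hi)) (hlG_nonneg.trans hlG)
        _ = 2 ^ 2 * (L * γ) := by ring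
    calc ∑ i ∈ G, √(a i) ≤ √(2 ^ 2 * (L * γ)) := le_sqrt_of_sq_le hbound
      _ = 2 * √(L * γ) := by rw [sqrt_mul (by norm_num), sqrt_sq zero_le_two]
  have hGσ : #G * σ ≤ 2 * √(L * γ) :=
    calc #G * σ = ∑ i ∈ G, σ := by rw [sum_const, nsmul_eq_mul]
      _ ≤ ∑ i ∈ G, √(a i) := sum_le_sum fun i hi => hσ i (hGs hi)
      _ ≤ 2 * √(L * γ) := hsqrt
  have hs_pos : (0 : ℝ) < #s := by exact_mod_cast hs.card_pos
  rw [div_mul_eq_mul_div, le_div_iff₀ hs_pos]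
  rcases le_or_gt σ 0 with hσ0 | hσ0
  · nlinarith [sqrt_nonneg (L * γ)]
  · nlinarith

end Counting

theorem sub_le_of_abs_sub_le_of_forall_le {α : Type*} {f μ σ : α → ℝ} {c : ℝ}
    (hconf : ∀ x, |f x - μ x| ≤ c * σ x) {xhat : α} (hmax : ∀ x, μ x ≤ μ xhat) (x : α) :
    f x - f xhat ≤ c * σ x + c * σ xhat := by
  linarith [abs_le.mp (hconf x), abs_le.mp (hconf xhat), hmax x]

theorem va_mvr_simple_regret_general
    {𝒳 : Type u} (k : 𝒳 → 𝒳 → ℝ) (hk : IsKernel k)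
    (T : ℕ)
    (ρ : ℕ → ℝ)
    (hV : 0 < ∑ t ∈ Finset.range T, ρ t ^ 2)
    (xs : ℕ → 𝒳)
    (hinv : ∀ t ≤ T,
      (gramMat k (preT xs t) + Matrix.diagonal (fun i : Fin t => ρ i.val ^ 2)).det ≠ 0)
    (hMVR : ∀ t < T, ∀ x : 𝒳,
      postStd k (Matrix.diagonal fun i : Fin t => ρ i.val ^ 2) (preT xs t) x
        ≤ postStd k (Matrix.diagonal fun i : Fin t => ρ i.val ^ 2) (preT xs t) (xs t))
    (γ : ℝ)
    (hγ : ∀ Z : Fin T → 𝒳,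
      infoGain k (Matrix.diagonal fun i : Fin T =>
        max (ρ i.val ^ 2) ((∑ t ∈ Finset.range T, ρ t ^ 2) / T)) Z ≤ γ)
    (hbig : (T : ℝ) / 2 ≥ 4 * γ)
    (sβ : ℝ) (hβ : 0 ≤ sβ) (y : Fin T → ℝ) (f : 𝒳 → ℝ)
    (hconf : ∀ x : 𝒳,
      |f x - postMean k (Matrix.diagonal fun i : Fin T => ρ i.val ^ 2) (preT xs T) y x|
        ≤ sβ * postStd k (Matrix.diagonal fun i : Fin T => ρ i.val ^ 2) (preT xs T) x)
    (xhat : 𝒳)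
    (hxhat : ∀ x : 𝒳,
      postMean k (Matrix.diagonal fun i : Fin T => ρ i.val ^ 2) (preT xs T) y x
        ≤ postMean k (Matrix.diagonal fun i : Fin T => ρ i.val ^ 2) (preT xs T) y xhat)
    (xstar : 𝒳) :
    f xstar - f xhat
      ≤ (8 * sβ / T) * Real.sqrt (2 * (∑ t ∈ Finset.range T, ρ t ^ 2) * γ) := by
  set V := ∑ t ∈ range T, ρ t ^ 2
  have hT : T ≠ 0 := by rintro rfl; simp [V] at hV
  set l : ℕ → ℝ := fun i => max (ρ i ^ 2) (V / T)
  have hl i : 0 < l i := (div_pos hV (by positivity)).trans_le (le_max_right _ _)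
  have hlog := infoGain_preT_eq_sum_log hk xs hl T ▸ hγ (preT xs T)
  have hL : ∑ i ∈ range T, l i ≤ 2 * V :=
    calc ∑ i ∈ range T, l i ≤ ∑ i ∈ range T, (ρ i ^ 2 + V / T) :=
          sum_le_sum fun i _ => max_le_add_of_nonneg (sq_nonneg _) (by positivity)
      _ = 2 * V := by rw [sum_add_distrib, sum_const, card_range, nsmul_eq_mul]; field_simp; ring
  have hσ (x : 𝒳) :
      postStd k (diagonal fun i : Fin T => ρ i.val ^ 2) (preT xs T) x ≤ 4 / T * √(2 * V * γ) := by
    have := le_four_div_card_mul_sqrt (s := range T) (γ := γ) (a := fun i =>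
        postVar k (diagonal fun j : Fin i => l j) (preT xs i) (xs i))
      (fun i _ => postVar_diagonal_nonneg hk _ (fun j => hl j) _)
      (fun i _ => hl i) hL (by linarith) (by rw [card_range]; linarith) (nonempty_range_iff.mpr hT)
      fun i hi => postStd_preT_le_sqrt_postVar xs hk (d := fun i => ρ i ^ 2)
        (fun i => sq_nonneg _) (fun i => le_max_left _ _) hl (mem_range.mp hi).le
        (hinv i (mem_range.mp hi).le) (hinv T le_rfl) (hMVR i (mem_range.mp hi)) x
    rwa [card_range] at this
  calc f xstar - f xhat
      ≤ sβ * postStd k (diagonal fun i : Fin T => ρ i.val ^ 2) (preT xs T) xstar +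
          sβ * postStd k (diagonal fun i : Fin T => ρ i.val ^ 2) (preT xs T) xhat :=
        sub_le_of_abs_sub_le_of_forall_le hconf hxhat xstar
    _ ≤ sβ * (4 / T * √(2 * V * γ)) + sβ * (4 / T * √(2 * V * γ)) := by gcongr <;> exact hσ _
    _ = 8 * sβ / T * √(2 * V * γ) := by ring

/-- simple regret of variance-aware MVR under a valid confidence
bound. -/
theorem va_mvr_simple_regret
    {𝒳 : Type u} (k : 𝒳 → 𝒳 → ℝ) (hk : IsKernel k)
    (T : ℕ) (hT : 0 < T)
    (ρ : ℕ → ℝ) (hρ : ∀ t < T, 0 ≤ ρ t)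
    (hV : 0 < ∑ t ∈ Finset.range T, ρ t ^ 2)
    (xs : ℕ → 𝒳)
    (hinv : ∀ t ≤ T,
      (gramMat k (preT xs t) + Matrix.diagonal (fun i : Fin t => ρ i.val ^ 2)).det ≠ 0)
    (hMVR : ∀ t < T, ∀ x : 𝒳,
      postStd k (Matrix.diagonal fun i : Fin t => ρ i.val ^ 2) (preT xs t) x
        ≤ postStd k (Matrix.diagonal fun i : Fin t => ρ i.val ^ 2) (preT xs t) (xs t))
    (γ : ℝ) (hγ0 : 0 ≤ γ)
    (hγ : ∀ Z : Fin T → 𝒳,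
      infoGain k (Matrix.diagonal fun i : Fin T =>
        max (ρ i.val ^ 2) ((∑ t ∈ Finset.range T, ρ t ^ 2) / T)) Z ≤ γ)
    (hbig : (T : ℝ) / 2 ≥ 4 * γ)
    (sβ : ℝ) (hβ : 0 ≤ sβ) (y : Fin T → ℝ) (f : 𝒳 → ℝ)
    (hconf : ∀ x : 𝒳,
      |f x - postMean k (Matrix.diagonal fun i : Fin T => ρ i.val ^ 2) (preT xs T) y x|
        ≤ sβ * postStd k (Matrix.diagonal fun i : Fin T => ρ i.val ^ 2) (preT xs T) x)
    (xhat : 𝒳)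
    (hxhat : ∀ x : 𝒳,
      postMean k (Matrix.diagonal fun i : Fin T => ρ i.val ^ 2) (preT xs T) y x
        ≤ postMean k (Matrix.diagonal fun i : Fin T => ρ i.val ^ 2) (preT xs T) y xhat)
    (xstar : 𝒳) :
    f xstar - f xhat
      ≤ (8 * sβ / T) * Real.sqrt (2 * (∑ t ∈ Finset.range T, ρ t ^ 2) * γ) :=
  va_mvr_simple_regret_general k hk T ρ hV xs hinv hMVR γ hγ hbig sβ hβ y f hconf xhat hxhat xstar
end
end
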